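/- Suppose W = {g_ω} has exactly one element. Then for every (A,b) ∈ LTA(n,2)_{h2}^{h1}, the coefficient of g_ω both in (A,b)·h1 and in (A,b)·h2 vanishes: ⟨(A,b)·h1⟩_{g_ω} = 0 and ⟨(A,b)·h2⟩_{g_ω} = 0. -/

import Mathlib

open Finset

/-! Common setup: `R_n = F_2[x_0,…,x_{n−1}]/(x_i^2 − x_i)`.  A (squarefree) monomial is
identified with its index set `ind(g) ⊆ {0,…,n−1}`.  Reduced elements of `R_n` are
identified, via the (bijective) evaluation map `ev`, with Boolean functions
`F_2^n → F_2`, i.e. with vectors in `F_2^N` indexed by the points of `F_2^n`. -/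

/-- Monomials of `M_n`, identified with their index sets. -/
abbrev Mon (n : ℕ) := Finset (Fin n)

/-- Points of `F_2^n`. -/
abbrev Pt (n : ℕ) := Fin n → ZMod 2

/-- Elements of `R_n` (equivalently, vectors of `F_2^N`), identified with Boolean
functions via the evaluation map `ev`. -/
abbrev BF (n : ℕ) := Pt n → ZMod 2

variable {n : ℕ}

/-- `ev` of the monomial `∏_{i ∈ S} x_i`. -/
def evm (S : Mon n) : BF n := fun x => ∏ i ∈ S, x i

/-- The coefficient `⟨f⟩_S` of the monomial `S` in the reduced polynomial represented by
the Boolean function `f` (binary Möbius inversion: `⟨f⟩_S = ∑_{supp x ⊆ S} f(x)`). -/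
def mcoeff (f : BF n) (S : Mon n) : ZMod 2 :=
  ∑ x ∈ Finset.univ.filter (fun x : Pt n => ∀ i ∉ S, x i = 0), f x

/-- The row index `[g] = ∑_{i ∉ ind(g)} 2^i` of a monomial. -/
def rowIdx (S : Mon n) : ℕ := ∑ i ∈ Sᶜ, 2 ^ (i : ℕ)

/-- `Ovd h g` means `h ≺_o g`: `h` is a one-variable descendant of `g`, i.e. `g = h·x_i`
for some `i ∉ ind(h)`, or `g = q·x_i`, `h = q·x_j` for a monomial `q` and `j < i`. -/
def Ovd (h g : Mon n) : Prop :=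
  (∃ i ∉ h, g = insert i h) ∨
  (∃ (q : Mon n) (i j : Fin n), i ∉ q ∧ j ∉ q ∧ j < i ∧ g = insert i q ∧ h = insert j q)

/-- The standard partial order `≼` on monomials: `g ≼ h` iff some divisor `h'` of `h` with
`deg h' = deg g` dominates `g` coordinatewise after sorting the index lists increasingly. -/
def MonLE (g h : Mon n) : Prop :=
  ∃ h' ⊆ h, h'.card = g.card ∧
    List.Forall₂ (· ≤ ·) (Finset.sort g (· ≤ ·)) (Finset.sort h' (· ≤ ·))

/-- `C(I)` is a decreasing monomial code. -/
def DecMonCode (I : Set (Mon n)) : Prop := ∀ h ∈ I, ∀ g, MonLE g h → g ∈ I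

/-- The monomial code `C(I)`: the `F_2`-span of `{ev(g) : g ∈ I}`. -/
def code (I : Set (Mon n)) : Set (BF n) := ↑(Submodule.span (ZMod 2) (evm '' I))

/-- An element `(A,b)` of `LTA(n,2)`: `A` lower triangular with unit diagonal. -/
structure LTA (n : ℕ) where
  A : Matrix (Fin n) (Fin n) (ZMod 2)
  b : Pt n
  diag : ∀ i, A i i = 1
  lower : ∀ i j : Fin n, i < j → A i j = 0

/-- The affine map `x ↦ Ax + b` on points. -/
def LTA.actPt (L : LTA n) (x : Pt n) : Pt n := L.A.mulVec x + L.b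

/-- The action of `(A,b)` on `R_n` (equivalently on `F_2^N`):
`((A,b)·f)(x) = f(Ax+b)`, so that `(A,b)·ev(f) = ev((A,b)·f)`. -/
def LTA.act (L : LTA n) (f : BF n) : BF n := fun x => f (L.actPt x)

/-- Hamming weight. -/
def wt (f : BF n) : ℕ := (Finset.univ.filter (fun x => f x ≠ 0)).card

/-- Weight distribution of a set of vectors: `d ↦ |{x ∈ S : wt x = d}|`. -/
noncomputable def wdist (S : Set (BF n)) : ℕ → ℕ := fun d => Nat.card {x : BF n // x ∈ S ∧ wt x = d}

/-- Membership in the subgroup `LTA(n,2)_{h2}^{h1}`: all strictly-lower-triangular entries of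
`A` and all entries of `b` vanish except possibly the free parameters: for
`f ∈ O_{h1}∖O_{h2}∖D`, the entry `a_{s,t}` when `h1 = q·x_s`, `f = q·x_t`, `t < s`, and the
entry `b_r` when `h1 = f·x_r`; for `f ∈ O_{h2}∖O_{h1}∖D`, the entry `a_{s,t}` when
`h2 = q·x_s`, `f = q·x_t`, `t < s`, and the entry `b_r` when `h2 = f·x_r`. -/
def InSub (h1 h2 : Mon n) (O1 O2 D : Set (Mon n)) (L : LTA n) : Prop :=
  (∀ s t : Fin n, t < s → L.A s t ≠ 0 →
    (∃ f ∈ ((O1 \ O2) \ D), ∃ q : Mon n, s ∉ q ∧ t ∉ q ∧ h1 = insert s q ∧ f = insert t q) ∨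
    (∃ f ∈ ((O2 \ O1) \ D), ∃ q : Mon n, s ∉ q ∧ t ∉ q ∧ h2 = insert s q ∧ f = insert t q)) ∧
  (∀ r : Fin n, L.b r ≠ 0 →
    (∃ f ∈ ((O1 \ O2) \ D), r ∉ f ∧ h1 = insert r f) ∨
    (∃ f ∈ ((O2 \ O1) \ D), r ∉ f ∧ h2 = insert r f))

/-- The standing context: a decreasing monomial code `C(I)` with `n ≥ 1`, last frozen index
`τ = max F` where `F = {0,…,N−1} ∖ {[g] : g ∈ I}`; `h1` the monomial of `I` of smallest row
index; `h2` the monomial of `I` of smallest row index among those with `[h1] < [h2]` that are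
not one-variable descendants of `h1`; and the feasibility assumption
`|ind(h1)∖ind(h2)| ≤ 2`, `|ind(h2)∖ind(h1)| ≤ 2`. -/
structure Setup (n : ℕ) where
  npos : 1 ≤ n
  I : Set (Mon n)
  dec : DecMonCode I
  τ : ℕ
  τlt : τ < 2 ^ n
  τfrozen : τ ∉ rowIdx '' I
  τmax : ∀ m < 2 ^ n, m ∉ rowIdx '' I → m ≤ τ
  h1 : Mon n
  h1mem : h1 ∈ I
  h1min : ∀ g ∈ I, rowIdx h1 ≤ rowIdx g
  h2 : Mon n
  h2mem : h2 ∈ I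
  h12 : rowIdx h1 < rowIdx h2
  h2novd : ¬ Ovd h2 h1
  h2min : ∀ g ∈ I, rowIdx h1 < rowIdx g → ¬ Ovd g h1 → rowIdx h2 ≤ rowIdx g
  feas1 : (h1 \ h2).card ≤ 2
  feas2 : (h2 \ h1).card ≤ 2

namespace Setup

variable (C : Setup n)

/-- `O_{h1} = {f ∈ I : f ≺_o h1, [h2] < [f] < τ}`. -/
def O1 : Set (Mon n) := {f | f ∈ C.I ∧ Ovd f C.h1 ∧ rowIdx C.h2 < rowIdx f ∧ rowIdx f < C.τ}

/-- `O_{h2} = {f ∈ I : f ≺_o h2, [f] < τ}`. -/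
def O2 : Set (Mon n) := {f | f ∈ C.I ∧ Ovd f C.h2 ∧ rowIdx f < C.τ}

/-- `O^c_{h1} = {f ∈ I : f ∉ O_{h1}, [h2] < [f] < τ}`. -/
def O1c : Set (Mon n) := {f | f ∈ C.I ∧ f ∉ C.O1 ∧ rowIdx C.h2 < rowIdx f ∧ rowIdx f < C.τ}

/-- `O^c_{h2} = {f ∈ I : f ∉ O_{h2}, [h2] < [f] < τ}`. -/
def O2c : Set (Mon n) := {f | f ∈ C.I ∧ f ∉ C.O2 ∧ rowIdx C.h2 < rowIdx f ∧ rowIdx f < C.τ}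

/-- `D = {f ∈ O_{h1} ∪ O_{h2} : ∏_{j ∈ ind(h1)∩ind(h2)} x_j ∤ f}`. -/
def D : Set (Mon n) := {f | f ∈ C.O1 ∪ C.O2 ∧ ¬ (C.h1 ∩ C.h2 ⊆ f)}

/-- `T = {f ∈ I : [f] > τ}`. -/
def T : Set (Mon n) := {f | f ∈ C.I ∧ C.τ < rowIdx f}

/-- `B = ((O_{h2}∖O_{h1}) ∩ D) ∪ (O^c_{h1} ∩ O^c_{h2}) ∪ T`. -/
def B : Set (Mon n) := ((C.O2 \ C.O1) ∩ C.D) ∪ (C.O1c ∩ C.O2c) ∪ C.T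

/-- `(A,b) ∈ LTA(n,2)_{h2}^{h1}`. -/
def Mem (L : LTA n) : Prop := InSub C.h1 C.h2 C.O1 C.O2 C.D L

/-- `W = {g ∈ O^c_{h1} ∩ O^c_{h2} : ∃ (A,b) ∈ LTA(n,2)_{h2}^{h1}, ∃ p ∈ O_{h1}∖O_{h2}∖D,
⟨(A,b)·g⟩_p ≠ 0}`. -/
def W : Set (Mon n) :=
  {g | g ∈ C.O1c ∩ C.O2c ∧
    ∃ L : LTA n, C.Mem L ∧ ∃ p ∈ ((C.O1 \ C.O2) \ C.D), mcoeff (L.act (evm g)) p ≠ 0}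

/-- `L` and `L'` have equal values on all entries associated with `O_{h2}∖O_{h1}∖D`
in the definition of the subgroup `LTA(n,2)_{h2}^{h1}`. -/
def agreeO2 (L L' : LTA n) : Prop :=
  (∀ f ∈ ((C.O2 \ C.O1) \ C.D), ∀ (q : Mon n) (s t : Fin n),
      s ∉ q → t ∉ q → t < s → C.h2 = insert s q → f = insert t q → L.A s t = L'.A s t) ∧
  (∀ f ∈ ((C.O2 \ C.O1) \ C.D), ∀ r : Fin n, r ∉ f → C.h2 = insert r f → L.b r = L'.b r)

end Setup

/-! Expanding `∏_{i ∈ g} (Ax + b)_i`, every monomial of `(A,b)·g` arises from `g` by replacing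
each variable `x_i` by a term (a variable or the constant) of the affine form in row `i`. For
`(A,b) ∈ LTA(n,2)_{h2}^{h1}` only the rows `a = max (h1 ∖ h2)` and `c ∈ h2 ∖ h1` are not the
identity: a colex (top-bit) comparison with `[h2] < [f]` rules out every other row. Moving `x_a`
in `h1` lands in `O_{h1}∖O_{h2}∖D`, and moving some `x_c` in `h2` lands in `O_{h2}∖O_{h1}∖D`.
Hence the monomials of `(A,b)·h1` lie in `{h1} ∪ O_{h1}`, and, since `|h2 ∖ h1| ≤ 2`, those of
`(A,b)·h2` lie in `{h2} ∪ O_{h2}` or avoid `h2 ∖ h1`. Now `g_ω ∈ W` lies in neither `O_{h1}` nor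
`O_{h2}`, is colex-below `h2`, and meets `h2 ∖ h1`: otherwise only `x_a` of `g_ω` can move, and
reaching `p ∈ O_{h1}∖O_{h2}∖D ⊇ h1 ∖ {a}` would force `h1 ⊆ g_ω`. -/

open Finset.Colex

section Monomials

variable {n : ℕ}

lemma evm_eq_ite (S : Mon n) (x : Pt n) :
    evm S x = if ∀ i ∈ S, x i = 1 then 1 else 0 := by
  have hbool : ∀ u : ZMod 2, u = (if u = 1 then 1 else 0) := by decide
  rw [evm, prod_congr rfl fun i _ => hbool (x i), prod_ite_zero, prod_const_one]
  congr

lemma evm_biUnion {ι : Type*} (s : Finset ι) (t : ι → Mon n) (x : Pt n) :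
    evm (s.biUnion t) x = ∏ i ∈ s, evm (t i) x := by
  classical
  simp only [evm_eq_ite, prod_boole, mem_biUnion, forall_exists_index, and_imp]
  exact if_congr ⟨fun h a ha i hi => h i a ha hi, fun h i a ha hi => h a ha i hi⟩ rfl rfl

lemma filter_support_subset_eq_piFinset (T : Mon n) :
    univ.filter (fun x : Pt n => ∀ i ∉ T, x i = 0) =
      Fintype.piFinset fun i => if i ∈ T then univ else {0} := by
  ext x
  simp only [mem_filter, mem_univ, true_and, Fintype.mem_piFinset]
  refine forall_congr' fun i => ?_
  split_ifs with hi <;> simp [hi]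

lemma mcoeff_evm (S T : Mon n) : mcoeff (evm S) T = if S = T then 1 else 0 := by
  -- The sum factors over the coordinates; coordinate `i` contributes `1 + 0`, `1 + 1`, `0` or `1`
  -- according to `(i ∈ S, i ∈ T)`, so the product is `1` exactly when `S = T`.
  have hfactor : ∀ i, (∑ u ∈ (if i ∈ T then univ else {0} : Finset (ZMod 2)),
      if i ∈ S then u else 1) = if (i ∈ S ↔ i ∈ T) then 1 else 0 := by
    intro i
    by_cases hS : i ∈ S <;> by_cases hT : i ∈ T <;> simp [hS, hT] <;> decide
  calc mcoeff (evm S) T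
      = ∑ x ∈ Fintype.piFinset (fun i => if i ∈ T then univ else {0}),
          ∏ i, if i ∈ S then x i else 1 := by
        rw [mcoeff, filter_support_subset_eq_piFinset]
        simp only [evm, prod_ite_mem, univ_inter]
    _ = if S = T then 1 else 0 := by
        rw [← prod_univ_sum _ fun i u => if i ∈ S then u else 1,
          Fintype.prod_congr _ _ hfactor, Fintype.prod_ite_zero, prod_const_one]
        simp only [← Finset.ext_iff]

lemma mcoeff_sum_mul_evm {ι : Type*} [Fintype ι] (c : ι → ZMod 2) (S : ι → Mon n)
    (m : Mon n) :
    mcoeff (fun x => ∑ k, c k * evm (S k) x) m = ∑ k, c k * if S k = m then 1 else 0 := by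
  simp only [← mcoeff_evm, mcoeff, mul_sum]
  exact sum_comm

end Monomials

namespace LTA

variable {n : ℕ}

/-- The coefficients of the affine form `x ↦ (Ax + b)_i`: `some j` indexes the coefficient of
`x_j` and `none` the constant term. -/
def coeff (L : LTA n) (i : Fin n) : Option (Fin n) → ZMod 2
  | none => L.b i
  | some j => L.A i j

lemma actPt_apply_eq_sum (L : LTA n) (x : Pt n) (i : Fin n) :
    L.actPt x i = ∑ o, L.coeff i o * evm o.toFinset x := by
  simp [actPt, coeff, evm, Fintype.sum_option, Matrix.mulVec, dotProduct, add_comm]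

lemma act_evm_eq_sum (L : LTA n) (g : Mon n) :
    L.act (evm g) = fun x => ∑ σ : g → Option (Fin n),
      (∏ i : g, L.coeff i (σ i)) * evm (univ.biUnion fun i => (σ i).toFinset) x := by
  classical
  funext x
  rw [act, evm, ← prod_coe_sort]
  simp only [actPt_apply_eq_sum, Fintype.prod_sum, prod_mul_distrib, evm_biUnion]

lemma exists_of_mcoeff_act_evm_ne_zero {L : LTA n} {g m : Mon n}
    (h : mcoeff (L.act (evm g)) m ≠ 0) :
    ∃ σ : Fin n → Option (Fin n),
      (∀ i ∈ g, L.coeff i (σ i) ≠ 0) ∧ g.biUnion (fun i => (σ i).toFinset) = m := by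
  classical
  rw [act_evm_eq_sum, mcoeff_sum_mul_evm] at h
  obtain ⟨σ, -, hσ⟩ := exists_ne_zero_of_sum_ne_zero h
  obtain ⟨hprod, hm⟩ := mul_ne_zero_iff.1 hσ
  refine ⟨fun i => if hi : i ∈ g then σ (⟨i, hi⟩ : g) else none, fun i hi => ?_, ?_⟩
  · simpa [hi] using prod_ne_zero_iff.1 hprod ⟨i, hi⟩ (mem_univ _)
  · rw [← (ite_ne_right_iff.1 hm).1]
    ext j
    simp

end LTA

lemma Finset.biUnion_toFinset_eq_self {α : Type*} [DecidableEq α] {s : Finset α}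
    {σ : α → Option α} (hσ : ∀ i ∈ s, σ i = some i) :
    s.biUnion (fun i => (σ i).toFinset) = s :=
  (biUnion_congr rfl fun i hi => by rw [hσ i hi, Option.toFinset_some]).trans
    biUnion_singleton_eq_self

lemma Finset.biUnion_toFinset_eq_or {α : Type*} [DecidableEq α] {s : Finset α}
    {σ : α → Option α} {d : α} (hσ : ∀ i ∈ s, i ≠ d → σ i = some i) :
    s.biUnion (fun i => (σ i).toFinset) = s ∨
      d ∈ s ∧ σ d ≠ some d ∧
        s.biUnion (fun i => (σ i).toFinset) = (σ d).toFinset ∪ s.erase d := by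
  by_cases hd : d ∈ s ∧ σ d ≠ some d
  · refine Or.inr ⟨hd.1, hd.2, ?_⟩
    rw [← insert_erase hd.1, biUnion_insert, erase_insert (notMem_erase d s),
      biUnion_toFinset_eq_self fun i hi => hσ i (mem_of_mem_erase hi) (ne_of_mem_erase hi)]
  · refine Or.inl (biUnion_toFinset_eq_self fun i hi => ?_)
    by_cases hid : i = d
    · subst hid
      exact not_not.1 fun hne => hd ⟨hi, hne⟩
    · exact hσ i hi hid

lemma rowIdx_lt_rowIdx_iff {n : ℕ} {S T : Mon n} :
    rowIdx S < rowIdx T ↔ toColex T < toColex S := by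
  have hsum : ∀ U : Mon n, rowIdx U + ∑ i ∈ U, 2 ^ (i : ℕ) = ∑ i : Fin n, 2 ^ (i : ℕ) :=
    fun U => sum_compl_add_sum U _
  have hcolex := geomSum_lt_geomSum_iff_toColex_lt_toColex (n := 2)
    (s := T.image Fin.val) (t := S.image Fin.val) le_rfl
  rw [sum_image Fin.val_injective.injOn, sum_image Fin.val_injective.injOn,
    toColex_image_lt_toColex_image Fin.val_strictMono] at hcolex
  rw [← hcolex]
  have := hsum S; have := hsum T
  omega

lemma Ovd.exists_erase_subset {n : ℕ} {f g : Mon n} (h : Ovd f g) :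
    ∃ i ∈ g, i ∉ f ∧ g.erase i ⊆ f := by
  rcases h with ⟨i, hif, rfl⟩ | ⟨q, i, j, hiq, hjq, hji, rfl, rfl⟩
  · exact ⟨i, mem_insert_self i f, hif, (erase_insert hif).subset⟩
  · refine ⟨i, mem_insert_self i q, ?_, (erase_insert hiq).trans_subset (subset_insert j q)⟩
    simp [hji.ne', hiq]

lemma Finset.erase_eq_and_notMem_union_of_eq_insert {α : Type*} [DecidableEq α]
    {s q : Finset α} {i : α} {o : Option α} (hs : s = insert i q) (hiq : i ∉ q)
    (ho : ∀ t ∈ o, t ≠ i ∧ t ∉ q) :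
    s.erase i = q ∧ i ∈ s ∧ i ∉ o.toFinset ∪ q ∧ ∀ t ∈ o, t ∉ s := by
  subst hs
  refine ⟨erase_insert hiq, mem_insert_self i q, ?_, fun t ht => ?_⟩
  · simp only [mem_union, Option.mem_toFinset, not_or]
    exact ⟨fun hi => (ho i hi).1 rfl, hiq⟩
  · simp [ho t ht]

namespace Setup

variable {n : ℕ} (C : Setup n)

lemma toColex_h2_lt_h1 : toColex C.h2 < toColex C.h1 := rowIdx_lt_rowIdx_iff.1 C.h12

lemma toColex_lt_h2_of_mem_O1 {f : Mon n} (hf : f ∈ C.O1) : toColex f < toColex C.h2 :=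
  rowIdx_lt_rowIdx_iff.1 hf.2.2.1

lemma sdiff_nonempty : (C.h1 \ C.h2).Nonempty :=
  let ⟨k, hk1, hk2, _⟩ := toColex_lt_toColex_iff_exists_forall_lt.1 C.toColex_h2_lt_h1
  ⟨k, mem_sdiff.2 ⟨hk1, hk2⟩⟩

/-- The top bit in which `h1` and `h2` differ; the only row of `(A,b)` that the parameters
attached to `O_{h1}∖O_{h2}∖D` can occupy. -/
noncomputable def aMax : Fin n := (C.h1 \ C.h2).max' C.sdiff_nonempty

lemma aMax_mem_h1 : C.aMax ∈ C.h1 := (mem_sdiff.1 ((C.h1 \ C.h2).max'_mem _)).1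

lemma aMax_notMem_h2 : C.aMax ∉ C.h2 := (mem_sdiff.1 ((C.h1 \ C.h2).max'_mem _)).2

lemma lt_aMax {j : Fin n} (hj2 : j ∈ C.h2) (hj1 : j ∉ C.h1) : j < C.aMax :=
  let ⟨_, hk1, hk2, hk⟩ := toColex_lt_toColex_iff_exists_forall_lt.1 C.toColex_h2_lt_h1
  (hk j hj2 hj1).trans_le (le_max' _ _ (mem_sdiff.2 ⟨hk1, hk2⟩))

lemma eq_aMax {i : Fin n} (hi2 : i ∉ C.h2)
    (hlt : toColex (C.h1.erase i) < toColex C.h2) : i = C.aMax := by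
  obtain ⟨k, hk2, hki, hk⟩ := toColex_lt_toColex_iff_exists_forall_lt.1 hlt
  have hk1 : k ∉ C.h1 := fun hk1 => hki (mem_erase.2 ⟨ne_of_mem_of_not_mem hk2 hi2, hk1⟩)
  by_contra hne
  exact (C.lt_aMax hk2 hk1).asymm
    (hk C.aMax (mem_erase.2 ⟨Ne.symm hne, C.aMax_mem_h1⟩) C.aMax_notMem_h2)

lemma inter_subset_of_mem_O1_sdiff {f : Mon n} (hf : f ∈ (C.O1 \ C.O2) \ C.D) :
    C.h1 ∩ C.h2 ⊆ f :=
  not_not.1 fun hK => hf.2 ⟨Or.inl hf.1.1, hK⟩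

lemma inter_subset_of_mem_O2_sdiff {f : Mon n} (hf : f ∈ (C.O2 \ C.O1) \ C.D) :
    C.h1 ∩ C.h2 ⊆ f :=
  not_not.1 fun hK => hf.2 ⟨Or.inr hf.1.1, hK⟩

lemma erase_aMax_subset_of_mem_O1_sdiff {p : Mon n} (hp : p ∈ (C.O1 \ C.O2) \ C.D) :
    C.h1.erase C.aMax ⊆ p ∧ C.aMax ∉ p := by
  obtain ⟨i, hi1, hip, hsub⟩ := hp.1.1.2.1.exists_erase_subset
  have hi2 : i ∉ C.h2 := fun hi2 =>
    hip (C.inter_subset_of_mem_O1_sdiff hp (mem_inter.2 ⟨hi1, hi2⟩))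
  obtain rfl := C.eq_aMax hi2
    ((toColex_le_toColex_of_subset hsub).trans_lt (C.toColex_lt_h2_of_mem_O1 hp.1.1))
  exact ⟨hsub, hip⟩

end Setup

namespace Setup

variable {n : ℕ} {C : Setup n} {L : LTA n}

lemma Mem.coeff_ne_zero (hL : C.Mem L) {i : Fin n} {o : Option (Fin n)}
    (h : L.coeff i o ≠ 0) :
    o = some i ∨
      (i = C.aMax ∧ (∀ t ∈ o, t ∉ C.h1) ∧
        o.toFinset ∪ C.h1.erase i ∈ (C.O1 \ C.O2) \ C.D) ∨
      (i ∈ C.h2 \ C.h1 ∧ (∀ t ∈ o, t ∉ C.h2) ∧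
        o.toFinset ∪ C.h2.erase i ∈ (C.O2 \ C.O1) \ C.D) := by
  have hrow : o = some i ∨ ∃ q, i ∉ q ∧ (∀ t ∈ o, t ≠ i ∧ t ∉ q) ∧
      ((C.h1 = insert i q ∧ o.toFinset ∪ q ∈ (C.O1 \ C.O2) \ C.D) ∨
        (C.h2 = insert i q ∧ o.toFinset ∪ q ∈ (C.O2 \ C.O1) \ C.D)) := by
    rcases o with _ | j
    · rcases hL.2 i h with ⟨f, hf, hif, hh⟩ | ⟨f, hf, hif, hh⟩
      · exact Or.inr ⟨f, hif, by simp, Or.inl ⟨hh, by simpa⟩⟩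
      · exact Or.inr ⟨f, hif, by simp, Or.inr ⟨hh, by simpa⟩⟩
    · rcases lt_trichotomy j i with hji | rfl | hij
      · have ho : ∀ t ∈ some j, ∀ q : Mon n, j ∉ q → t ≠ i ∧ t ∉ q := by
          intro t ht q hjq
          obtain rfl := Option.mem_some_iff.1 ht
          exact ⟨hji.ne, hjq⟩
        rcases hL.1 i j hji h with ⟨f, hf, q, hiq, hjq, hh, rfl⟩ |
          ⟨f, hf, q, hiq, hjq, hh, rfl⟩
        · exact Or.inr ⟨q, hiq, fun t ht => ho t ht q hjq, Or.inl ⟨hh, by simpa⟩⟩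
        · exact Or.inr ⟨q, hiq, fun t ht => ho t ht q hjq, Or.inr ⟨hh, by simpa⟩⟩
      · exact Or.inl rfl
      · exact absurd (L.lower i j hij) h
  rcases hrow with hrow | ⟨q, hiq, ho, ⟨hh, hf⟩ | ⟨hh, hf⟩⟩
  · exact Or.inl hrow
  · obtain ⟨hq, hi1, hif, ho1⟩ := erase_eq_and_notMem_union_of_eq_insert hh hiq ho
    have hi2 : i ∉ C.h2 := fun hi2 =>
      hif (C.inter_subset_of_mem_O1_sdiff hf (mem_inter.2 ⟨hi1, hi2⟩))
    refine Or.inr (Or.inl ⟨C.eq_aMax hi2 ?_, ho1, hq ▸ hf⟩)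
    rw [hq]
    exact (toColex_le_toColex_of_subset subset_union_right).trans_lt
      (C.toColex_lt_h2_of_mem_O1 hf.1.1)
  · obtain ⟨hq, hi2, hif, ho2⟩ := erase_eq_and_notMem_union_of_eq_insert hh hiq ho
    have hi1 : i ∉ C.h1 := fun hi1 =>
      hif (C.inter_subset_of_mem_O2_sdiff hf (mem_inter.2 ⟨hi1, hi2⟩))
    exact Or.inr (Or.inr ⟨mem_sdiff.2 ⟨hi2, hi1⟩, ho2, hq ▸ hf⟩)

lemma Mem.mcoeff_act_h1_ne_zero (hL : C.Mem L) {m : Mon n}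
    (hm : mcoeff (L.act (evm C.h1)) m ≠ 0) : m = C.h1 ∨ m ∈ (C.O1 \ C.O2) \ C.D := by
  obtain ⟨σ, hσ, rfl⟩ := LTA.exists_of_mcoeff_act_evm_ne_zero hm
  have hkeep : ∀ i ∈ C.h1, i ≠ C.aMax → σ i = some i := fun i hi hia => by
    rcases hL.coeff_ne_zero (hσ i hi) with h | ⟨h, -⟩ | ⟨h, -⟩
    exacts [h, absurd h hia, absurd hi (mem_sdiff.1 h).2]
  rcases biUnion_toFinset_eq_or hkeep with h | ⟨ha, hne, h⟩
  · exact Or.inl h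
  · rcases hL.coeff_ne_zero (hσ _ ha) with h' | ⟨-, -, hP⟩ | ⟨h', -⟩
    exacts [absurd h' hne, Or.inr (h ▸ hP), absurd (mem_sdiff.1 h').1 C.aMax_notMem_h2]

lemma Mem.mcoeff_act_h2_ne_zero (hL : C.Mem L) {m : Mon n}
    (hm : mcoeff (L.act (evm C.h2)) m ≠ 0) :
    m = C.h2 ∨ m ∈ (C.O2 \ C.O1) \ C.D ∨ Disjoint m (C.h2 \ C.h1) := by
  obtain ⟨σ, hσ, rfl⟩ := LTA.exists_of_mcoeff_act_evm_ne_zero hm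
  have hmove : ∀ i ∈ C.h2, σ i ≠ some i →
      i ∈ C.h2 \ C.h1 ∧ (∀ t ∈ σ i, t ∉ C.h2) ∧
      (σ i).toFinset ∪ C.h2.erase i ∈ (C.O2 \ C.O1) \ C.D := fun i hi hne => by
    rcases hL.coeff_ne_zero (hσ i hi) with h | ⟨rfl, -⟩ | h
    exacts [absurd h hne, absurd hi C.aMax_notMem_h2, h]
  by_cases hkept : ∃ c ∈ C.h2 \ C.h1, σ c = some c
  · obtain ⟨c, hc, hσc⟩ := hkept
    have : Nonempty (Fin n) := ⟨c⟩
    have hmoved : (C.h2.filter fun i => σ i ≠ some i) ⊆ (C.h2 \ C.h1).erase c :=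
      fun i hi => by
        obtain ⟨hi, hne⟩ := mem_filter.1 hi
        exact mem_erase.2 ⟨fun hic => hne (hic ▸ hσc), (hmove i hi hne).1⟩
    obtain ⟨d, hd⟩ := card_le_one_iff_subset_singleton.1 <| (card_le_card hmoved).trans <| by
      rw [card_erase_of_mem hc]; have := C.feas2; omega
    have hkeep : ∀ i ∈ C.h2, i ≠ d → σ i = some i := fun i hi hid =>
      not_not.1 fun hne => hid (mem_singleton.1 (hd (mem_filter.2 ⟨hi, hne⟩)))
    rcases biUnion_toFinset_eq_or hkeep with h | ⟨hd2, hne, h⟩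
    · exact Or.inl h
    · exact Or.inr (Or.inl (h ▸ (hmove d hd2 hne).2.2))
  · refine Or.inr (Or.inr (disjoint_left.2 fun x hx hxE => ?_))
    obtain ⟨i, hi, hxi⟩ := mem_biUnion.1 hx
    rw [Option.mem_toFinset] at hxi
    by_cases hne : σ i = some i
    · have hxi : x = i := Option.some_injective _ (hxi.symm.trans hne)
      exact hkept ⟨i, hxi ▸ hxE, hne⟩
    · exact (hmove i hi hne).2.1 x hxi (mem_sdiff.1 hxE).1

lemma Mem.h1_subset_of_mcoeff_act_ne_zero (hL : C.Mem L) {g p : Mon n}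
    (hg : Disjoint g (C.h2 \ C.h1)) (hp : p ∈ (C.O1 \ C.O2) \ C.D)
    (h : mcoeff (L.act (evm g)) p ≠ 0) : p = g ∨ C.h1 ⊆ g := by
  obtain ⟨σ, hσ, rfl⟩ := LTA.exists_of_mcoeff_act_evm_ne_zero h
  have hkeep : ∀ i ∈ g, i ≠ C.aMax → σ i = some i := fun i hi hia => by
    rcases hL.coeff_ne_zero (hσ i hi) with h | ⟨h, -⟩ | ⟨h, -⟩
    exacts [h, absurd h hia, absurd h (disjoint_left.1 hg hi)]
  rcases biUnion_toFinset_eq_or hkeep with h | ⟨ha, hne, h⟩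
  · exact Or.inl h
  · right
    rcases hL.coeff_ne_zero (hσ _ ha) with h' | ⟨-, hout, -⟩ | ⟨h', -⟩
    · exact absurd h' hne
    · intro i hi
      by_cases hia : i = C.aMax
      · exact hia ▸ ha
      · have hip := (C.erase_aMax_subset_of_mem_O1_sdiff hp).1 (mem_erase.2 ⟨hia, hi⟩)
        rw [h, mem_union, Option.mem_toFinset] at hip
        exact mem_of_mem_erase (hip.resolve_left fun hσi => hout i hσi hi)
    · exact absurd (mem_sdiff.1 h').1 C.aMax_notMem_h2

end Setup

/-- if `W = {g_ω}`, then for every `(A,b) ∈ LTA(n,2)_{h2}^{h1}`, the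
coefficient of `g_ω` in `(A,b)·h1` and in `(A,b)·h2` vanishes. -/
theorem stmt14 {n : ℕ} (C : Setup n) (gω : Mon n) (hW : C.W = {gω})
    (L : LTA n) (hL : C.Mem L) :
    mcoeff (L.act (evm C.h1)) gω = 0 ∧ mcoeff (L.act (evm C.h2)) gω = 0 := by
  obtain ⟨⟨⟨-, hg1, hg_row, -⟩, ⟨-, hg2, -, -⟩⟩, L₀, hL₀, p, hp, hcoeff⟩ :=
    (hW ▸ Set.mem_singleton gω : gω ∈ C.W)
  have hg_lt_h2 : toColex gω < toColex C.h2 := rowIdx_lt_rowIdx_iff.1 hg_row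
  have hnot_subset : ∀ {h}, toColex C.h2 ≤ toColex h → ¬ h ⊆ gω := fun hh hsub =>
    not_lt.2 (hh.trans (toColex_le_toColex_of_subset hsub)) hg_lt_h2
  have hmeet : ¬ Disjoint gω (C.h2 \ C.h1) := fun hdisj =>
    (hL₀.h1_subset_of_mcoeff_act_ne_zero hdisj hp hcoeff).elim
      (fun hpg => hg1 (hpg ▸ hp.1.1)) (hnot_subset C.toColex_h2_lt_h1.le)
  constructor
  · by_contra h
    rcases hL.mcoeff_act_h1_ne_zero h with rfl | hP
    exacts [hnot_subset C.toColex_h2_lt_h1.le subset_rfl, hg1 hP.1.1]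
  · by_contra h
    rcases hL.mcoeff_act_h2_ne_zero h with rfl | hP | hdisj
    exacts [hnot_subset le_rfl subset_rfl, hg2 hP.1.1, hmeet hdisj]
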